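/- For every 0 ≤ k ≤ n and 0 < q < 1, the sum over all top-k lists π_k (injective maps {1,...,k} → [n]) of q^{d(π_k) + L(π_k)} equals ψ(n,q) / ψ(n-k,q). -/

import Mathlib

open Finset

/-- ψ(n,q) = ∏_{i=1}^{n} (1 + q + ... + q^{i-1}). -/
def psi (n : ℕ) (q : ℝ) : ℝ := ∏ i ∈ Finset.range n, ∑ j ∈ Finset.range (i + 1), q ^ j

/-- Reverse major index of a full permutation. -/
def dR {n : ℕ} (π : Equiv.Perm (Fin n)) : ℕ :=
  ∑ i : Fin (n - 1),
    if π ⟨i.val + 1, by have := i.isLt; omega⟩ < π ⟨i.val, by have := i.isLt; omega⟩ then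
      n - (i.val + 1) else 0

/-- Truncated reverse major index of a top-k list. -/
def dtop {n k : ℕ} (f : Fin k → Fin n) : ℕ :=
  ∑ i : Fin (k - 1),
    if f ⟨i.val + 1, by have := i.isLt; omega⟩ < f ⟨i.val, by have := i.isLt; omega⟩ then
      n - (i.val + 1) else 0

/-- L(π_k): number of items not appearing in the top-k list that are smaller than its
last entry. -/
def Ltop {n k : ℕ} (f : Fin k → Fin n) : ℕ :=
  if h : 0 < k then
    (Finset.univ.filter
      (fun x : Fin n => x ∉ Finset.image f Finset.univ ∧ x < f ⟨k - 1, by omega⟩)).card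
  else 0

/-!
Appending an unused value `x` to a top-`k` list `f` gives a top-`(k+1)` list with
`d + L = d f + r + [r < L f] (n - k)`, where `r` is the rank of `x` among the `n - k` unused
values: `L` becomes `r`, and a descent of weight `n - k` appears at position `k` exactly when `x`
lies below the old last entry, i.e. when `r < L f`. As `x` varies, these exponents run over
`L f, …, L f + n - k - 1`, so the extensions of `f` weigh `q ^ (d f + L f) [n - k]_q` in total.
Summing over `f`, the total weights `W k` of top-`k` lists satisfy `W (k + 1) = W k [n - k]_q`,
whence `W k ψ(n - k) = ψ(n)`.
-/

section RankIn

variable {α : Type*} [LinearOrder α]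

def rankIn (s : Finset α) (x : α) : ℕ := #{y ∈ s | y < x}

lemma rankIn_le_card (s : Finset α) (x : α) : rankIn s x ≤ #s := card_filter_le _ _

lemma rankIn_mono (s : Finset α) : Monotone (rankIn s) := fun _ _ hxy =>
  card_le_card (monotone_filter_right s (fun _ _ hy => hy.trans_le hxy))

lemma rankIn_lt_rankIn_iff {s : Finset α} {x : α} (hx : x ∈ s) (a : α) :
    rankIn s x < rankIn s a ↔ x < a := by
  refine ⟨fun h => lt_of_not_ge fun hax => h.not_ge (rankIn_mono s hax), fun h => ?_⟩
  apply card_lt_card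
  refine (ssubset_iff_of_subset (monotone_filter_right s (fun _ _ hy => hy.trans h))).mpr ?_
  exact ⟨x, mem_filter.mpr ⟨hx, h⟩, fun hxx => (mem_filter.mp hxx).2.false⟩

lemma injOn_rankIn (s : Finset α) : Set.InjOn (rankIn s) s := by
  refine StrictMonoOn.injOn fun x hx y _ hxy => ?_
  exact (rankIn_lt_rankIn_iff hx y).mpr hxy

lemma image_rankIn (s : Finset α) : s.image (rankIn s) = range #s := by
  refine eq_of_subset_of_card_le (fun j hj => ?_) ?_
  · obtain ⟨x, hx, rfl⟩ := mem_image.mp hj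
    exact mem_range.mpr (card_lt_card (filter_ssubset.mpr ⟨x, hx, lt_irrefl x⟩))
  · rw [card_range, card_image_of_injOn (injOn_rankIn s)]

end RankIn

lemma sum_range_pow_rotate {R : Type*} [CommSemiring R] (q : R) {L m : ℕ} (hL : L ≤ m) :
    ∑ j ∈ range m, q ^ (j + if j < L then m else 0) = q ^ L * ∑ j ∈ range m, q ^ j := by
  have hhigh : ∑ j ∈ range L, q ^ (j + if j < L then m else 0) = ∑ j ∈ Ico m (m + L), q ^ j := by
    rw [sum_Ico_eq_sum_range, add_tsub_cancel_left]
    exact sum_congr rfl fun j hj => by rw [if_pos (mem_range.mp hj), add_comm]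
  have hlow : ∑ j ∈ Ico L m, q ^ (j + if j < L then m else 0) = ∑ j ∈ Ico L m, q ^ j :=
    sum_congr rfl fun j hj => by rw [if_neg (mem_Ico.mp hj).1.not_gt, add_zero]
  calc ∑ j ∈ range m, q ^ (j + if j < L then m else 0)
      = ∑ j ∈ Ico L m, q ^ j + ∑ j ∈ Ico m (m + L), q ^ j := by
        rw [← sum_range_add_sum_Ico _ hL, hhigh, hlow, add_comm]
    _ = ∑ j ∈ Ico L (L + m), q ^ j := by
        rw [sum_Ico_consecutive _ hL (by omega), add_comm m]
    _ = q ^ L * ∑ j ∈ range m, q ^ j := by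
        rw [sum_Ico_eq_sum_range, add_tsub_cancel_left, mul_sum]
        simp only [pow_add]

section TopK

variable {n k : ℕ}

lemma card_compl_image_of_injective {f : Fin k → Fin n} (hf : Function.Injective f) :
    #(univ.image f)ᶜ = n - k := by
  rw [card_compl, card_image_of_injective _ hf, card_univ, Fintype.card_fin, Fintype.card_fin]

lemma Ltop_zero (f : Fin 0 → Fin n) : Ltop f = 0 := dif_neg (lt_irrefl 0)

lemma Ltop_succ (f : Fin (k + 1) → Fin n) :
    Ltop f = rankIn (univ.image f)ᶜ (f (Fin.last k)) := by
  rw [Ltop, dif_pos k.succ_pos, rankIn]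
  congr 1
  ext y
  simp [and_comm, Fin.last]

lemma Ltop_snoc (f : Fin k → Fin n) (x : Fin n) :
    Ltop (Fin.snoc f x : Fin (k + 1) → Fin n) = rankIn (univ.image f)ᶜ x := by
  rw [Ltop_succ, Fin.snoc_last, rankIn, rankIn]
  congr 1
  ext y
  simp only [Fin.exists_fin_succ', mem_filter, mem_compl, mem_image, mem_univ, true_and,
    Fin.snoc_last, Fin.snoc_castSucc, not_or, not_exists]
  exact and_congr_left fun hyx => and_iff_left hyx.ne'

lemma dtop_eq_zero_of_le_one (hk : k ≤ 1) (f : Fin k → Fin n) : dtop f = 0 :=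
  sum_eq_zero fun i _ => absurd i.isLt (by omega)

lemma dtop_snoc (f : Fin (k + 1) → Fin n) (x : Fin n) :
    dtop (Fin.snoc f x : Fin (k + 2) → Fin n)
      = dtop f + if x < f (Fin.last k) then n - (k + 1) else 0 := by
  show ∑ i : Fin (k + 1), _ = _
  rw [Fin.sum_univ_castSucc]
  congr 1
  · exact sum_congr rfl fun i _ => by simp [Fin.snoc, Fin.castSucc]
  · simp [Fin.snoc, Fin.last]

lemma Ltop_le_card_compl_image (f : Fin k → Fin n) : Ltop f ≤ #(univ.image f)ᶜ := by
  cases k with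
  | zero => exact (Ltop_zero f).trans_le (Nat.zero_le _)
  | succ k => exact (Ltop_succ f).trans_le (rankIn_le_card _ _)

lemma dtop_snoc_add_Ltop_snoc (f : Fin k → Fin n) {x : Fin n} (hx : x ∈ (univ.image f)ᶜ) :
    dtop (Fin.snoc f x : Fin (k + 1) → Fin n) + Ltop (Fin.snoc f x : Fin (k + 1) → Fin n)
      = dtop f + (rankIn (univ.image f)ᶜ x
          + if rankIn (univ.image f)ᶜ x < Ltop f then n - k else 0) := by
  cases k with
  | zero =>
    rw [dtop_eq_zero_of_le_one le_rfl, dtop_eq_zero_of_le_one zero_le_one, Ltop_snoc, Ltop_zero]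
    simp
  | succ k =>
    rw [dtop_snoc, Ltop_snoc, Ltop_succ f]
    simp only [rankIn_lt_rankIn_iff hx]
    split_ifs <;> omega

variable {R : Type*} [CommSemiring R] (q : R)

lemma sum_pow_snoc_of_injective {f : Fin k → Fin n} (hf : Function.Injective f) :
    ∑ x ∈ (univ.image f)ᶜ,
        q ^ (dtop (Fin.snoc f x : Fin (k + 1) → Fin n) + Ltop (Fin.snoc f x : Fin (k + 1) → Fin n))
      = q ^ (dtop f + Ltop f) * ∑ j ∈ range (n - k), q ^ j := by
  set s := (univ.image f)ᶜ
  rw [← card_compl_image_of_injective hf]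
  calc _ = ∑ x ∈ s, q ^ dtop f * q ^ (rankIn s x + if rankIn s x < Ltop f then #s else 0) :=
        sum_congr rfl fun x hx => by
          rw [dtop_snoc_add_Ltop_snoc f hx, card_compl_image_of_injective hf, pow_add]
    _ = q ^ dtop f * ∑ j ∈ range #s, q ^ (j + if j < Ltop f then #s else 0) := by
        rw [← mul_sum, ← image_rankIn, sum_image (injOn_rankIn s)]
    _ = _ := by
        rw [sum_range_pow_rotate q (Ltop_le_card_compl_image f), pow_add, mul_assoc]

def topKWeightSum (n k : ℕ) : R :=
  ∑ f : Fin k → Fin n, if Function.Injective f then q ^ (dtop f + Ltop f) else 0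

lemma sum_weight_snoc (f : Fin k → Fin n) :
    ∑ x : Fin n, (if Function.Injective (Fin.snoc f x : Fin (k + 1) → Fin n) then
        q ^ (dtop (Fin.snoc f x : Fin (k + 1) → Fin n) + Ltop (Fin.snoc f x : Fin (k + 1) → Fin n))
        else 0)
      = (if Function.Injective f then q ^ (dtop f + Ltop f) else 0) * ∑ j ∈ range (n - k), q ^ j := by
  by_cases hf : Function.Injective f
  · rw [if_pos hf, ← sum_pow_snoc_of_injective q hf, ← univ_inter (univ.image f)ᶜ, ← sum_ite_mem]
    exact sum_congr rfl fun x _ => by simp [Fin.snoc_injective_iff, hf]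
  · rw [if_neg hf, zero_mul]
    exact sum_eq_zero fun x _ => if_neg fun h => hf (Fin.snoc_injective_iff.mp h).1

lemma topKWeightSum_zero : topKWeightSum q n 0 = 1 := by
  simp [topKWeightSum, Ltop_zero, dtop_eq_zero_of_le_one, Function.injective_of_subsingleton]

lemma topKWeightSum_succ :
    topKWeightSum q n (k + 1) = topKWeightSum q n k * ∑ j ∈ range (n - k), q ^ j := by
  rw [topKWeightSum, topKWeightSum, sum_mul, ← (Fin.snocEquiv fun _ => Fin n).sum_comp,
    Fintype.sum_prod_type, sum_comm]
  exact sum_congr rfl fun f _ => sum_weight_snoc q f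

end TopK

lemma psi_succ (n : ℕ) (q : ℝ) : psi (n + 1) q = psi n q * ∑ j ∈ range (n + 1), q ^ j :=
  prod_range_succ _ _

lemma psi_pos {q : ℝ} (hq : 0 < q) (n : ℕ) : 0 < psi n q :=
  prod_pos fun _ _ => sum_pos (fun j _ => pow_pos hq j) nonempty_range_add_one

lemma topKWeightSum_mul_psi {n k : ℕ} (hkn : k ≤ n) (q : ℝ) :
    topKWeightSum q n k * psi (n - k) q = psi n q := by
  induction k with
  | zero => rw [topKWeightSum_zero, one_mul, Nat.sub_zero]
  | succ k ih =>
    obtain ⟨m, hm⟩ : ∃ m, n - k = m + 1 := ⟨n - (k + 1), by omega⟩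
    rw [topKWeightSum_succ, ← ih (by omega), hm, psi_succ, show n - (k + 1) = m by omega]
    ring

theorem stmt4_general (n k : ℕ) (hkn : k ≤ n) (q : ℝ) (hq0 : 0 < q) :
    (∑ f : Fin k → Fin n,
        if Function.Injective f then q ^ (dtop f + Ltop f) else 0)
      = psi n q / psi (n - k) q := by
  rw [eq_div_iff (psi_pos hq0 _).ne']
  exact topKWeightSum_mul_psi hkn q

theorem stmt4 (n k : ℕ) (hkn : k ≤ n) (q : ℝ) (hq0 : 0 < q) (hq1 : q < 1) :
    (∑ f : Fin k → Fin n,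
        if Function.Injective f then q ^ (dtop f + Ltop f) else 0)
      = psi n q / psi (n - k) q :=
  stmt4_general n k hkn q hq0
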